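/- Let C ⊆ ℝⁿ be a rational polyhedral cone, i.e. C = {x ∈ ℝⁿ : ⟨λᵢ, x⟩ ≥ 0 for i = 1,…,m} for finitely many linear functionals λᵢ with integer coefficients. Then the monoid ℤⁿ ∩ C is finitely generated. -/

import Mathlib

/-!
Write a lattice point of the cone as `a - b` with `a, b ∈ ℕⁿ` and record the slack
`s = l (a - b) ∈ ℕᵐ`. The triples `(a, b, s)` form the solution monoid of a linear system
over `ℕ^(2n+m)`, which is closed under differences; by Dickson's lemma such a monoid is
generated by its finitely many minimal nonzero elements. The cone's lattice points are the image
of this monoid under `(a, b, s) ↦ a - b`, hence finitely generated as well.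
-/

open Matrix

namespace Gordan

variable {ι κ : Type*}

def diff : (ι → ℕ) × (ι → ℕ) × (κ → ℕ) →+ (ι → ℤ) :=
  AddMonoidHom.mk' (fun p j => p.1 j - p.2.1 j) fun p q => by
    ext; push_cast [Prod.fst_add, Prod.snd_add, Pi.add_apply]; ring

def slack : (ι → ℕ) × (ι → ℕ) × (κ → ℕ) →+ (κ → ℤ) :=
  AddMonoidHom.mk' (fun p i => p.2.2 i) fun p q => by
    ext; push_cast [Prod.snd_add, Pi.add_apply]; rfl

variable [Fintype ι]

def slackSolutions (l : Matrix κ ι ℤ) : AddSubmonoid ((ι → ℕ) × (ι → ℕ) × (κ → ℕ)) :=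
  ((mulVecLin l).toAddMonoidHom.comp diff).eqLocusM slack

theorem mem_slackSolutions {l : Matrix κ ι ℤ} {p : (ι → ℕ) × (ι → ℕ) × (κ → ℕ)} :
    p ∈ slackSolutions l ↔ l *ᵥ diff p = slack p :=
  Iff.rfl

theorem slackSolutions_fg [Finite κ] (l : Matrix κ ι ℤ) : (slackSolutions l).FG :=
  AddSubmonoid.fg_eqLocusM _ _

theorem coe_map_diff_slackSolutions (l : Matrix κ ι ℤ) :
    ((slackSolutions l).map diff : Set (ι → ℤ)) = {v | 0 ≤ l *ᵥ v} := by
  ext v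
  simp only [AddSubmonoid.coe_map, Set.mem_image, SetLike.mem_coe, mem_slackSolutions,
    Set.mem_ofPred_eq]
  constructor
  · rintro ⟨p, hp, rfl⟩ i
    rw [hp]
    exact Int.natCast_nonneg _
  · intro hv
    have hdiff : diff (fun j => (v j).toNat, fun j => (-v j).toNat,
        fun i => ((l *ᵥ v) i).toNat) = v :=
      funext fun j => Int.toNat_sub_toNat_neg (v j)
    refine ⟨_, ?_, hdiff⟩
    rw [hdiff]
    exact funext fun i => (Int.toNat_of_nonneg (hv i)).symm

theorem setOf_forall_nonneg_sum_real (l : κ → ι → ℤ) :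
    {v : ι → ℤ | ∀ i, 0 ≤ ∑ j, (l i j : ℝ) * v j} = {v | 0 ≤ l *ᵥ v} := by
  ext v
  simp only [Set.mem_ofPred_eq, Pi.le_def, Pi.zero_apply, mulVec, dotProduct]
  exact_mod_cast Iff.rfl

end Gordan

open Gordan in
/-- Gordan's lemma: the lattice points of a rational polyhedral cone in ℝⁿ form a
finitely generated monoid. -/
theorem stmt14 {n m : ℕ} (l : Fin m → Fin n → ℤ) :
    ∃ S : Finset (Fin n → ℤ),
      ((AddSubmonoid.closure (S : Set (Fin n → ℤ))) : Set (Fin n → ℤ)) =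
        {v : Fin n → ℤ | ∀ i : Fin m, 0 ≤ ∑ j, (l i j : ℝ) * (v j : ℝ)} := by
  obtain ⟨S, hS⟩ := (slackSolutions_fg l).map diff
  refine ⟨S, ?_⟩
  rw [hS]
  exact (coe_map_diff_slackSolutions l).trans (setOf_forall_nonneg_sum_real l).symm
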